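/- arXiv:0708.2491 — 7 statements merged into one kernel-verified Lean document; each statement's English description precedes it below -/
import Mathlib

section
/- For every even natural number n, the function X̃^(n) satisfies the bound |X̃^(n)(x)| ≤ M^{n/2} x^n ≤ M^{n/2} a^n for all x ∈ [0,a], where M = max_{x∈[0,a]} |q(x)|. -/
open MeasureTheory Set Filter

/-- The sequence X̃^(n): X̃^(0) ≡ 1; for n ≥ 1, X̃^(n)(x) = n ∫₀ˣ X̃^(n-1)(ξ) dξ
if n is even, and X̃^(n)(x) = n ∫₀ˣ X̃^(n-1)(ξ) q(ξ) dξ if n is odd. -/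
noncomputable def Xtilde (q : ℝ → ℂ) : ℕ → ℝ → ℂ
  | 0 => fun _ => 1
  | n + 1 => fun x => ((n + 1 : ℕ) : ℂ) *
      ∫ ξ in (0:ℝ)..x, Xtilde q n ξ * (if Even (n + 1) then 1 else q ξ)

/-- The sequence X^(n): X^(0) ≡ 1; for n ≥ 1, X^(n)(x) = n ∫₀ˣ X^(n-1)(ξ) q(ξ) dξ
if n is even, and X^(n)(x) = n ∫₀ˣ X^(n-1)(ξ) dξ if n is odd. -/
noncomputable def Xup (q : ℝ → ℂ) : ℕ → ℝ → ℂ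
  | 0 => fun _ => 1
  | n + 1 => fun x => ((n + 1 : ℕ) : ℂ) *
      ∫ ξ in (0:ℝ)..x, Xup q n ξ * (if Even (n + 1) then q ξ else 1)

lemma Xtilde_key (a : ℝ) (ha : 0 < a) (q : ℝ → ℂ) (hq : ContinuousOn q (Set.Icc 0 a))
    (M : ℝ) (hM : IsGreatest ((fun x => ‖q x‖) '' Set.Icc 0 a) M) (n : ℕ) :
    ContinuousOn (Xtilde q n) (Set.Icc 0 a) ∧
    ∀ x ∈ Set.Icc 0 a, ‖Xtilde q n x‖ ≤ M ^ ((n + 1) / 2) * x ^ n := by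
  have hM0 : 0 ≤ M := le_trans (norm_nonneg (q 0)) (hM.2 ⟨0, ⟨le_refl 0, ha.le⟩, rfl⟩)
  induction n with
  | zero =>
    refine ⟨by simpa [Xtilde] using (continuousOn_const : ContinuousOn (fun _ : ℝ => (1:ℂ)) _), ?_⟩
    intro x hx; simp [Xtilde]
  | succ n ih =>
    obtain ⟨ihc, ihb⟩ := ih
    set c : ℝ → ℂ := fun ξ => if Even (n + 1) then 1 else q ξ with hc
    have hcc : ContinuousOn c (Set.Icc 0 a) := by
      by_cases h : Even (n + 1)
      · simpa [hc, h] using (continuousOn_const : ContinuousOn (fun _ : ℝ => (1:ℂ)) _)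
      · simpa [hc, h] using hq
    have hfc : ContinuousOn (fun ξ => Xtilde q n ξ * c ξ) (Set.Icc 0 a) := ihc.mul hcc
    have hbig : ∀ ξ ∈ Set.Icc 0 a,
        ‖Xtilde q n ξ * c ξ‖ ≤ M ^ ((n + 2) / 2) * ξ ^ n := by
      intro ξ hξ
      rw [norm_mul]
      by_cases h : Even (n + 1)
      · have hn2 : (n + 2) / 2 = (n + 1) / 2 := by
          obtain ⟨k, hk⟩ := h; omega
        simp only [hc, if_pos h, norm_one, mul_one, hn2]
        exact ihb ξ hξ
      · have hn2 : (n + 2) / 2 = (n + 1) / 2 + 1 := by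
          rw [Nat.not_even_iff_odd] at h; obtain ⟨k, hk⟩ := h; omega
        simp only [hc, if_neg h]
        have hqξ : ‖q ξ‖ ≤ M := hM.2 ⟨ξ, hξ, rfl⟩
        have hξ0 : 0 ≤ ξ := hξ.1
        calc ‖Xtilde q n ξ‖ * ‖q ξ‖ ≤ (M ^ ((n + 1) / 2) * ξ ^ n) * M := by
              apply mul_le_mul (ihb ξ hξ) hqξ (norm_nonneg _)
              positivity
          _ = M ^ ((n + 2) / 2) * ξ ^ n := by rw [hn2]; ring
    have hInt : ∀ x ∈ Set.Icc (0:ℝ) a,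
        IntervalIntegrable (fun ξ => Xtilde q n ξ * c ξ) volume 0 x := fun x hx =>
      (hfc.mono (Set.Icc_subset_Icc le_rfl hx.2)).intervalIntegrable_of_Icc hx.1
    have hXeq : ∀ x : ℝ, Xtilde q (n + 1) x
        = ((n + 1 : ℕ) : ℂ) * ∫ ξ in (0:ℝ)..x, Xtilde q n ξ * c ξ := fun x => rfl
    constructor
    · have hcont : ContinuousOn (fun x => ∫ ξ in (0:ℝ)..x, Xtilde q n ξ * c ξ)
          (Set.Icc 0 a) := by
        have := intervalIntegral.continuousOn_primitive_interval
          (f := fun ξ => Xtilde q n ξ * c ξ) (μ := volume) (a := (0:ℝ)) (b := a)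
          (by rw [Set.uIcc_of_le ha.le]; exact hfc.integrableOn_compact isCompact_Icc)
        rwa [Set.uIcc_of_le ha.le] at this
      intro x hx
      exact ((continuousOn_const.mul hcont) x hx).congr
        (fun y _ => (hXeq y).symm) (hXeq x).symm
    · intro x hx
      have hx0 : (0:ℝ) ≤ x := hx.1
      have hbound : (fun ξ => M ^ ((n + 2) / 2) * ξ ^ n) =
          fun ξ => M ^ ((n + 2) / 2) * ξ ^ n := rfl
      have h1 : ‖∫ ξ in (0:ℝ)..x, Xtilde q n ξ * c ξ‖
          ≤ ∫ ξ in (0:ℝ)..x, M ^ ((n + 2) / 2) * ξ ^ n := by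
        refine le_trans (intervalIntegral.norm_integral_le_integral_norm hx0) ?_
        apply intervalIntegral.integral_mono_on hx0
        · exact (hInt x hx).norm
        · exact Continuous.intervalIntegrable (by continuity) 0 x
        · intro ξ hξ
          exact hbig ξ ⟨hξ.1, le_trans hξ.2 hx.2⟩
      have h2 : ∫ ξ in (0:ℝ)..x, M ^ ((n + 2) / 2) * ξ ^ n
          = M ^ ((n + 2) / 2) * (x ^ (n + 1) / (n + 1)) := by
        rw [intervalIntegral.integral_const_mul, integral_pow]; ring
      rw [hXeq x, norm_mul, Complex.norm_natCast]
      have hn1 : ((n:ℝ) + 1) ≠ 0 := by positivity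
      push_cast
      calc ((n:ℝ) + 1) * ‖∫ ξ in (0:ℝ)..x, Xtilde q n ξ * c ξ‖
          ≤ ((n:ℝ) + 1) * (M ^ ((n + 2) / 2) * (x ^ (n + 1) / ((n:ℝ) + 1))) := by
            rw [← h2]
            exact mul_le_mul_of_nonneg_left h1 (by positivity)
        _ = M ^ ((n + 2) / 2) * x ^ (n + 1) := by field_simp
        _ = M ^ ((n + 1 + 1) / 2) * x ^ (n + 1) := rfl

/-- For every even natural number n, the function X̃^(n) satisfies
|X̃^(n)(x)| ≤ M^{n/2} x^n ≤ M^{n/2} a^n for all x ∈ [0,a], where M = max_{x∈[0,a]} |q(x)|. -/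
theorem stmt_0 (a : ℝ) (ha : 0 < a) (q : ℝ → ℂ) (hq : ContinuousOn q (Set.Icc 0 a))
    (M : ℝ) (hM : IsGreatest ((fun x => ‖q x‖) '' Set.Icc 0 a) M)
    (n : ℕ) (hn : Even n) :
    ∀ x ∈ Set.Icc 0 a,
      ‖Xtilde q n x‖ ≤ M ^ (n / 2) * x ^ n ∧
      M ^ (n / 2) * x ^ n ≤ M ^ (n / 2) * a ^ n := by
  have hM0 : 0 ≤ M := le_trans (norm_nonneg (q 0)) (hM.2 ⟨0, ⟨le_refl 0, ha.le⟩, rfl⟩)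
  have key := (Xtilde_key a ha q hq M hM n).2
  have heq : (n + 1) / 2 = n / 2 := by obtain ⟨k, hk⟩ := hn; omega
  intro x hx
  refine ⟨by simpa [heq] using key x hx, ?_⟩
  apply mul_le_mul_of_nonneg_left (pow_le_pow_left₀ hx.1 hx.2 n) (by positivity)
end

section
/- For every odd natural number n, the function X^(n) satisfies the bound |X^(n)(x)| ≤ M^{(n-1)/2} x^n ≤ M^{(n-1)/2} a^n for all x ∈ [0,a], where M = max_{x∈[0,a]} |q(x)|. -/
open MeasureTheory Set Filter

theorem norm_natCast_succ_mul_integral_le {f : ℝ → ℂ} {K x : ℝ} (n : ℕ) (hx : 0 ≤ x)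
    (hf : ∀ ξ ∈ Icc 0 x, ‖f ξ‖ ≤ K * ξ ^ n) :
    ‖((n + 1 : ℕ) : ℂ) * ∫ ξ in (0 : ℝ)..x, f ξ‖ ≤ K * x ^ (n + 1) := by
  have hint : ‖∫ ξ in (0 : ℝ)..x, f ξ‖ ≤ ∫ ξ in (0 : ℝ)..x, K * ξ ^ n :=
    intervalIntegral.norm_integral_le_of_norm_le hx
      (ae_of_all _ fun ξ hξ => hf ξ (Ioc_subset_Icc_self hξ))
      ((continuous_const.mul (continuous_pow n)).intervalIntegrable 0 x)
  rw [intervalIntegral.integral_const_mul, integral_pow] at hint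
  rw [norm_mul, Complex.norm_natCast]
  calc ((n + 1 : ℕ) : ℝ) * ‖∫ ξ in (0 : ℝ)..x, f ξ‖
      ≤ ((n + 1 : ℕ) : ℝ) * (K * ((x ^ (n + 1) - 0 ^ (n + 1)) / (n + 1))) := by gcongr
    _ = K * x ^ (n + 1) := by field_simp; simp; ring

theorem pow_div_two_mul_ite_even_succ (M : ℝ) (n : ℕ) :
    M ^ (n / 2) * (if Even (n + 1) then M else 1) = M ^ ((n + 1) / 2) := by
  rcases Nat.even_or_odd n with ⟨m, rfl⟩ | ⟨m, rfl⟩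
  · rw [if_neg (by simp [parity_simps]), mul_one]
    congr 1
    omega
  · rw [if_pos (by simp [parity_simps]), ← pow_succ]
    congr 1
    omega

theorem norm_Xup_le {q : ℝ → ℂ} {a M : ℝ} (hq : ∀ x ∈ Icc 0 a, ‖q x‖ ≤ M) (n : ℕ) :
    ∀ x ∈ Icc 0 a, ‖Xup q n x‖ ≤ M ^ (n / 2) * x ^ n := by
  induction n with
  | zero => simp [Xup]
  | succ n ih =>
    intro x hx
    rw [Xup, ← pow_div_two_mul_ite_even_succ]
    refine norm_natCast_succ_mul_integral_le n hx.1 fun ξ hξ => ?_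
    have hξa : ξ ∈ Icc 0 a := Icc_subset_Icc le_rfl hx.2 hξ
    have hM : 0 ≤ M := (norm_nonneg _).trans (hq ξ hξa)
    have hweight : ‖if Even (n + 1) then q ξ else 1‖ ≤ if Even (n + 1) then M else 1 := by
      split_ifs
      exacts [hq ξ hξa, norm_one.le]
    rw [norm_mul, mul_right_comm]
    exact mul_le_mul (ih ξ hξa) hweight (norm_nonneg _) (by have := hξ.1; positivity)

theorem stmt_1_general (a : ℝ) (q : ℝ → ℂ)
    (M : ℝ) (hM : IsGreatest ((fun x => ‖q x‖) '' Set.Icc 0 a) M)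
    (n : ℕ) (hn : Odd n) :
    ∀ x ∈ Set.Icc 0 a,
      ‖Xup q n x‖ ≤ M ^ ((n - 1) / 2) * x ^ n ∧
      M ^ ((n - 1) / 2) * x ^ n ≤ M ^ ((n - 1) / 2) * a ^ n := by
  obtain ⟨⟨x₀, -, rfl⟩, hub⟩ := hM
  have hq : ∀ x ∈ Icc 0 a, ‖q x‖ ≤ ‖q x₀‖ := fun x hx => hub ⟨x, hx, rfl⟩
  have hdiv : (n - 1) / 2 = n / 2 := by obtain ⟨m, rfl⟩ := hn; omega
  intro x hx
  rw [hdiv]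
  exact ⟨norm_Xup_le hq n x hx, by gcongr; exacts [hx.1, hx.2]⟩

/-- For every odd natural number n, the function X^(n) satisfies
|X^(n)(x)| ≤ M^{(n-1)/2} x^n ≤ M^{(n-1)/2} a^n for all x ∈ [0,a], where
M = max_{x∈[0,a]} |q(x)|. -/
theorem stmt_1 (a : ℝ) (ha : 0 < a) (q : ℝ → ℂ) (hq : ContinuousOn q (Set.Icc 0 a))
    (M : ℝ) (hM : IsGreatest ((fun x => ‖q x‖) '' Set.Icc 0 a) M)
    (n : ℕ) (hn : Odd n) :
    ∀ x ∈ Set.Icc 0 a,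
      ‖Xup q n x‖ ≤ M ^ ((n - 1) / 2) * x ^ n ∧
      M ^ ((n - 1) / 2) * x ^ n ≤ M ^ ((n - 1) / 2) * a ^ n :=
  stmt_1_general a q M hM n hn
end

section
/- The series u₁(x) = Σ_{even n ≥ 0} X̃^(n)(x)/n! converges uniformly on [0,a]: the partial sums of the series converge uniformly on [0,a] to a function u₁ : [0,a] → ℂ. -/
open MeasureTheory Set Filter

/-! If `‖q‖ ≤ K` on `[0, a]` with `K ≥ 1`, each integration step of the recursion multiplies
the bound by at most `K` and the factor `n` is absorbed by `∫₀ˣ ξ^(n-1) dξ = xⁿ / n`, so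
`‖X̃^(n)(x)‖ ≤ (K x)ⁿ`. The even terms are therefore dominated by those of `cosh (K a)`,
and the Weierstrass M-test gives uniform convergence. -/

theorem norm_integral_le_mul_pow_succ_div {E : Type*} [NormedAddCommGroup E] [NormedSpace ℝ E]
    {f : ℝ → E} {x C : ℝ} {n : ℕ} (hx : 0 ≤ x) (hf : ∀ ξ ∈ Ioc 0 x, ‖f ξ‖ ≤ C * ξ ^ n) :
    ‖∫ ξ in (0:ℝ)..x, f ξ‖ ≤ C * (x ^ (n + 1) / (n + 1)) := by
  calc ‖∫ ξ in (0:ℝ)..x, f ξ‖ ≤ ∫ ξ in (0:ℝ)..x, C * ξ ^ n :=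
        intervalIntegral.norm_integral_le_of_norm_le hx (ae_of_all _ hf)
          ((by fun_prop : Continuous fun ξ : ℝ => C * ξ ^ n).intervalIntegrable _ _)
    _ = C * (x ^ (n + 1) / (n + 1)) := by
        rw [intervalIntegral.integral_const_mul, integral_pow]
        simp

theorem norm_Xtilde_le {q : ℝ → ℂ} {a K : ℝ} (hK : 1 ≤ K) (hqK : ∀ ξ ∈ Icc 0 a, ‖q ξ‖ ≤ K)
    (n : ℕ) : ∀ x ∈ Icc 0 a, ‖Xtilde q n x‖ ≤ (K * x) ^ n := by
  induction n with
  | zero => simp [Xtilde]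
  | succ n ih =>
    intro x hx
    have hweight : ∀ ξ ∈ Icc 0 a, ‖(if Even (n + 1) then 1 else q ξ)‖ ≤ K := by
      intro ξ hξ
      split_ifs
      · simpa using hK
      · exact hqK ξ hξ
    have hintegrand : ∀ ξ ∈ Ioc 0 x,
        ‖Xtilde q n ξ * (if Even (n + 1) then 1 else q ξ)‖ ≤ K ^ (n + 1) * ξ ^ n := by
      intro ξ hξ
      have hξa : ξ ∈ Icc 0 a := ⟨hξ.1.le, hξ.2.trans hx.2⟩
      calc ‖Xtilde q n ξ * (if Even (n + 1) then 1 else q ξ)‖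
          ≤ (K * ξ) ^ n * K := by
            rw [norm_mul]
            exact mul_le_mul (ih ξ hξa) (hweight ξ hξa) (norm_nonneg _)
              ((norm_nonneg _).trans (ih ξ hξa))
        _ = K ^ (n + 1) * ξ ^ n := by ring
    calc ‖Xtilde q (n + 1) x‖
        = (n + 1) * ‖∫ ξ in (0:ℝ)..x, Xtilde q n ξ * (if Even (n + 1) then 1 else q ξ)‖ := by
          rw [Xtilde, norm_mul, Complex.norm_natCast]
          push_cast
          rfl
      _ ≤ (n + 1) * (K ^ (n + 1) * (x ^ (n + 1) / (n + 1))) := by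
          gcongr
          exact norm_integral_le_mul_pow_succ_div hx.1 hintegrand
      _ = (K * x) ^ (n + 1) := by
          field_simp
          ring

theorem stmt_2_general (a : ℝ) (q : ℝ → ℂ) (hq : ContinuousOn q (Set.Icc 0 a)) :
    ∃ u₁ : ℝ → ℂ, TendstoUniformlyOn
      (fun N x => ∑ k ∈ Finset.range N, Xtilde q (2 * k) x / (Nat.factorial (2 * k) : ℂ))
      u₁ Filter.atTop (Set.Icc 0 a) := by
  obtain ⟨M, hM⟩ := isCompact_Icc.exists_bound_of_continuousOn hq
  set K := max M 1
  have hK : 1 ≤ K := le_max_right M 1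
  have hXtilde := norm_Xtilde_le hK fun ξ hξ => (hM ξ hξ).trans (le_max_left M 1)
  have hsum : Summable fun k : ℕ => (K * a) ^ (2 * k) / ((2 * k).factorial : ℝ) :=
    (Real.summable_pow_div_factorial (K * a)).comp_injective fun m n h => by omega
  refine ⟨_, tendstoUniformlyOn_tsum_nat hsum fun k x hx => ?_⟩
  rw [norm_div, Complex.norm_natCast]
  gcongr
  refine (hXtilde (2 * k) x hx).trans ?_
  gcongr
  · exact mul_nonneg (zero_le_one.trans hK) hx.1
  · exact hx.2

/-- The series u₁(x) = Σ_{even n ≥ 0} X̃^(n)(x)/n! converges uniformly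
on [0,a]: its partial sums converge uniformly on [0,a] to a function u₁ : [0,a] → ℂ. -/
theorem stmt_2 (a : ℝ) (ha : 0 < a) (q : ℝ → ℂ) (hq : ContinuousOn q (Set.Icc 0 a)) :
    ∃ u₁ : ℝ → ℂ, TendstoUniformlyOn
      (fun N x => ∑ k ∈ Finset.range N, Xtilde q (2 * k) x / (Nat.factorial (2 * k) : ℂ))
      u₁ Filter.atTop (Set.Icc 0 a) :=
  stmt_2_general a q hq
end

section
/- The function u₂(x) = Σ_{odd n ≥ 1} X^(n)(x)/n! is twice differentiable on (0,a) and satisfies the one-dimensional stationary Schrödinger equation −u₂''(x) + q(x) u₂(x) = 0 for all x ∈ (0,a). -/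
/-! Writing `w n = q` for even `n` and `w n = 1` for odd `n`, the recursion gives
`(X⁽ⁿ⁺¹⁾ / (n+1)!)' = X⁽ⁿ⁾ / n! · w (n+1)`, and induction gives `‖X⁽ⁿ⁾ x‖ ≤ (M x)ⁿ` on `[0,a]`,
where `M ≥ 1` bounds `‖q‖` there. Hence every series of such terms is dominated by the
exponential series of `M a` and may be differentiated term by term: `u₂' = ∑ X⁽²ᵏ⁾/(2k)!` and
`u₂'' = q ∑ X⁽²ᵏ⁺¹⁾/(2k+1)! = q u₂`. The calculus is done for the continuous extension
`q ∘ projIcc 0 a` of `q` to `ℝ`, which does not change `u₂` on `[0,a]`. -/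

open MeasureTheory Set Filter

/-- u₁(x) = Σ_{even n ≥ 0} X̃^(n)(x)/n!, written as a sum over even indices n = 2k. -/
noncomputable def u₁ (q : ℝ → ℂ) (x : ℝ) : ℂ :=
  ∑' k : ℕ, Xtilde q (2 * k) x / (Nat.factorial (2 * k) : ℂ)

/-- u₂(x) = Σ_{odd n ≥ 1} X^(n)(x)/n!, written as a sum over odd indices n = 2k+1. -/
noncomputable def u₂ (q : ℝ → ℂ) (x : ℝ) : ℂ :=
  ∑' k : ℕ, Xup q (2 * k + 1) x / (Nat.factorial (2 * k + 1) : ℂ)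

namespace Xup

variable {q : ℝ → ℂ}

lemma continuous_weight (hq : Continuous q) (n : ℕ) :
    Continuous fun ξ => (if Even n then q ξ else 1 : ℂ) :=
  continuous_if_const _ (fun _ => hq) (fun _ => continuous_const)

lemma norm_weight_le {M : ℝ} (hM1 : 1 ≤ M) {t : ℝ} (ht : ‖q t‖ ≤ M) (n : ℕ) :
    ‖(if Even n then q t else 1 : ℂ)‖ ≤ M := by
  split_ifs
  · exact ht
  · simpa using hM1

lemma hasDerivAt_succ_of_continuous (hq : Continuous q) {n : ℕ} (hn : Continuous (Xup q n))
    (x : ℝ) :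
    HasDerivAt (Xup q (n + 1))
      (((n + 1 : ℕ) : ℂ) * (Xup q n x * if Even (n + 1) then q x else 1)) x :=
  ((hn.mul (continuous_weight hq (n + 1))).integral_hasStrictDerivAt 0 x).hasDerivAt.const_mul _

lemma continuous (hq : Continuous q) (n : ℕ) : Continuous (Xup q n) := by
  induction n with
  | zero => exact continuous_const
  | succ n ih =>
    exact continuous_iff_continuousAt.2 fun x =>
      (hasDerivAt_succ_of_continuous hq ih x).continuousAt

lemma hasDerivAt_succ (hq : Continuous q) (n : ℕ) (x : ℝ) :
    HasDerivAt (Xup q (n + 1))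
      (((n + 1 : ℕ) : ℂ) * (Xup q n x * if Even (n + 1) then q x else 1)) x :=
  hasDerivAt_succ_of_continuous hq (Xup.continuous hq n) x

lemma eqOn_of_eqOn {q' : ℝ → ℂ} {a : ℝ} (h : EqOn q q' (Icc 0 a)) (n : ℕ) :
    EqOn (Xup q n) (Xup q' n) (Icc 0 a) := by
  induction n with
  | zero => exact fun _ _ => rfl
  | succ n ih =>
    intro x hx
    refine congrArg _ (intervalIntegral.integral_congr fun t ht => ?_)
    rw [uIcc_of_le hx.1] at ht
    have ht' : t ∈ Icc 0 a := ⟨ht.1, ht.2.trans hx.2⟩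
    simp only [ih ht', h ht']

lemma norm_le {a M : ℝ} (hM1 : 1 ≤ M) (hM : ∀ ξ ∈ Icc 0 a, ‖q ξ‖ ≤ M) (n : ℕ) :
    ∀ x ∈ Icc 0 a, ‖Xup q n x‖ ≤ (M * x) ^ n := by
  induction n with
  | zero => simp [Xup]
  | succ n ih =>
    rintro x ⟨hx0, hxa⟩
    have hM0 : 0 ≤ M := zero_le_one.trans hM1
    have h_integrand : ∀ t ∈ uIoc 0 x,
        ‖Xup q n t * if Even (n + 1) then q t else 1‖ ≤ M ^ (n + 1) * t ^ n := by
      intro t ht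
      rw [uIoc_of_le hx0] at ht
      have ht' : t ∈ Icc 0 a := ⟨ht.1.le, ht.2.trans hxa⟩
      calc _ ≤ (M * t) ^ n * M := by
            rw [norm_mul]
            exact mul_le_mul (ih t ht') (norm_weight_le hM1 (hM t ht') _) (norm_nonneg _)
              ((norm_nonneg _).trans (ih t ht'))
        _ = M ^ (n + 1) * t ^ n := by ring
    have h_integral : ‖∫ ξ in (0 : ℝ)..x, Xup q n ξ * if Even (n + 1) then q ξ else 1‖
        ≤ M ^ (n + 1) * (x ^ (n + 1) / (n + 1)) := by
      refine (intervalIntegral.norm_integral_le_abs_of_norm_le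
        ((ae_restrict_iff' measurableSet_uIoc).2 (ae_of_all _ h_integrand))
        (Continuous.intervalIntegrable (by fun_prop) 0 x)).trans_eq ?_
      rw [intervalIntegral.integral_const_mul, integral_pow, zero_pow n.succ_ne_zero, sub_zero,
        abs_of_nonneg (mul_nonneg (pow_nonneg hM0 _)
          (div_nonneg (pow_nonneg hx0 _) (by positivity)))]
    calc ‖Xup q (n + 1) x‖
        = (n + 1) * ‖∫ ξ in (0 : ℝ)..x, Xup q n ξ * if Even (n + 1) then q ξ else 1‖ := by
          rw [Xup, norm_mul, Complex.norm_natCast]; push_cast; rfl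
      _ ≤ (n + 1) * (M ^ (n + 1) * (x ^ (n + 1) / (n + 1))) := by gcongr
      _ = (M * x) ^ (n + 1) := by field_simp; ring

end Xup

noncomputable def scaledXup (q : ℝ → ℂ) (n : ℕ) (x : ℝ) : ℂ :=
  Xup q n x / (n.factorial : ℂ)

section scaledXup

variable {q : ℝ → ℂ} {a M : ℝ}

lemma hasDerivAt_scaledXup_succ (hq : Continuous q) (n : ℕ) (x : ℝ) :
    HasDerivAt (scaledXup q (n + 1)) (scaledXup q n x * if Even (n + 1) then q x else 1) x := by
  refine ((Xup.hasDerivAt_succ hq n x).div_const _).congr_deriv ?_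
  simp only [scaledXup, Nat.factorial_succ, Nat.cast_mul]
  field_simp

lemma norm_scaledXup_le (hM1 : 1 ≤ M) (hM : ∀ ξ ∈ Icc 0 a, ‖q ξ‖ ≤ M) (n : ℕ) {x : ℝ}
    (hx : x ∈ Icc 0 a) : ‖scaledXup q n x‖ ≤ (M * a) ^ n / n.factorial := by
  rw [scaledXup, norm_div, Complex.norm_natCast]
  gcongr
  calc ‖Xup q n x‖ ≤ (M * x) ^ n := Xup.norm_le hM1 hM n x hx
    _ ≤ (M * a) ^ n := by
      have := hx.1; have := zero_le_one.trans hM1; gcongr; exact hx.2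

lemma summable_scaledXup (hM1 : 1 ≤ M) (hM : ∀ ξ ∈ Icc 0 a, ‖q ξ‖ ≤ M) {s : ℕ → ℕ}
    (hs : s.Injective) {x : ℝ} (hx : x ∈ Icc 0 a) : Summable fun k => scaledXup q (s k) x :=
  ((Real.summable_pow_div_factorial (M * a)).comp_injective hs).of_norm_bounded fun _ =>
    norm_scaledXup_le hM1 hM _ hx

lemma hasDerivAt_tsum_scaledXup (hq : Continuous q) (hM1 : 1 ≤ M)
    (hM : ∀ ξ ∈ Icc 0 a, ‖q ξ‖ ≤ M) {s : ℕ → ℕ} (hs : s.Injective) {x : ℝ} (hx : x ∈ Ioo 0 a) :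
    HasDerivAt (fun y => ∑' k, scaledXup q (s k + 1) y)
      (∑' k, scaledXup q (s k) x * if Even (s k + 1) then q x else 1) x := by
  refine hasDerivAt_tsum_of_isPreconnected
    (((Real.summable_pow_div_factorial (M * a)).comp_injective hs).mul_right M) isOpen_Ioo
    isPreconnected_Ioo (fun k y _ => hasDerivAt_scaledXup_succ hq (s k) y) (fun k y hy => ?_) hx
    (summable_scaledXup hM1 hM ((add_left_injective 1).comp hs) (Ioo_subset_Icc_self hx)) hx
  have hy' := Ioo_subset_Icc_self hy
  rw [norm_mul]
  have h_term := norm_scaledXup_le hM1 hM (s k) hy'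
  exact mul_le_mul h_term (Xup.norm_weight_le hM1 (hM y hy') _) (norm_nonneg _)
    ((norm_nonneg _).trans h_term)

lemma hasDerivAt_u₂ (hq : Continuous q) (hM1 : 1 ≤ M) (hM : ∀ ξ ∈ Icc 0 a, ‖q ξ‖ ≤ M) {x : ℝ}
    (hx : x ∈ Ioo 0 a) : HasDerivAt (u₂ q) (∑' k, scaledXup q (2 * k) x) x := by
  have h := hasDerivAt_tsum_scaledXup hq hM1 hM (s := (2 * ·)) (mul_right_injective₀ two_ne_zero) hx
  simp only [Nat.even_add_one, even_two_mul, not_true_eq_false, if_false, mul_one] at h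
  exact h

lemma hasDerivAt_tsum_scaledXup_even (hq : Continuous q) (hM1 : 1 ≤ M)
    (hM : ∀ ξ ∈ Icc 0 a, ‖q ξ‖ ≤ M) {x : ℝ} (hx : x ∈ Ioo 0 a) :
    HasDerivAt (fun y => ∑' k, scaledXup q (2 * k) y) (q x * u₂ q x) x := by
  have h := hasDerivAt_tsum_scaledXup hq hM1 hM (s := (2 * · + 1))
    ((add_left_injective 1).comp (mul_right_injective₀ two_ne_zero)) hx
  have h_shift : ∀ y ∈ Ioo 0 a,
      ∑' k, scaledXup q (2 * k) y = 1 + ∑' k, scaledXup q (2 * k + 1 + 1) y := by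
    intro y hy
    rw [(summable_scaledXup hM1 hM (mul_right_injective₀ two_ne_zero)
      (Ioo_subset_Icc_self hy)).tsum_eq_zero_add]
    simp [scaledXup, Xup, mul_add]
  refine (h.const_add 1).congr_of_eventuallyEq
    (eventually_of_mem (isOpen_Ioo.mem_nhds hx) h_shift) |>.congr_deriv ?_
  have h_even (k : ℕ) : Even (2 * k + 1 + 1) := ⟨k + 1, by ring⟩
  simp only [h_even, if_true]
  rw [tsum_mul_right, mul_comm]
  rfl

end scaledXup

lemma u₂_eqOn {q q' : ℝ → ℂ} {a : ℝ} (h : EqOn q q' (Icc 0 a)) : EqOn (u₂ q) (u₂ q') (Icc 0 a) :=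
  fun x hx => tsum_congr fun k => by rw [Xup.eqOn_of_eqOn h _ hx]

lemma hasDerivAt_deriv_u₂ {q : ℝ → ℂ} {a M : ℝ} (hq : Continuous q) (hM1 : 1 ≤ M)
    (hM : ∀ ξ ∈ Icc 0 a, ‖q ξ‖ ≤ M) {x : ℝ} (hx : x ∈ Ioo 0 a) :
    HasDerivAt (deriv (u₂ q)) (q x * u₂ q x) x :=
  (hasDerivAt_tsum_scaledXup_even hq hM1 hM hx).congr_of_eventuallyEq <|
    eventually_of_mem (isOpen_Ioo.mem_nhds hx) fun _ hy => (hasDerivAt_u₂ hq hM1 hM hy).deriv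

/-- u₂(x) = Σ_{odd n ≥ 1} X^(n)(x)/n! is twice differentiable on (0,a)
and satisfies −u₂''(x) + q(x) u₂(x) = 0 for all x ∈ (0,a). -/
theorem stmt_7 (a : ℝ) (ha : 0 < a) (q : ℝ → ℂ) (hq : ContinuousOn q (Set.Icc 0 a)) :
    (∀ x ∈ Set.Ioo 0 a, DifferentiableAt ℝ (u₂ q) x ∧ DifferentiableAt ℝ (deriv (u₂ q)) x) ∧
    ∀ x ∈ Set.Ioo 0 a, -(deriv (deriv (u₂ q)) x) + q x * u₂ q x = 0 := by
  set Q : ℝ → ℂ := fun ξ => q (projIcc 0 a ha.le ξ)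
  have hQ : Continuous Q :=
    hq.comp_continuous (continuous_subtype_val.comp continuous_projIcc) fun ξ => (projIcc _ _ _ ξ).2
  have hqQ : EqOn q Q (Icc 0 a) := fun ξ hξ => by simp [Q, projIcc_of_mem _ hξ]
  obtain ⟨C, hC⟩ := isCompact_Icc.exists_bound_of_continuousOn hq
  have hQM : ∀ ξ ∈ Icc 0 a, ‖Q ξ‖ ≤ max C 1 := fun ξ hξ =>
    hqQ hξ ▸ (hC ξ hξ).trans (le_max_left _ _)
  have hu₂ {x : ℝ} (hx : x ∈ Ioo 0 a) : u₂ q =ᶠ[nhds x] u₂ Q :=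
    eventually_of_mem (Ioo_mem_nhds hx.1 hx.2) fun y hy => u₂_eqOn hqQ (Ioo_subset_Icc_self hy)
  have h₁ {x : ℝ} (hx : x ∈ Ioo 0 a) := hasDerivAt_u₂ hQ (le_max_right C 1) hQM hx
  have h₂ {x : ℝ} (hx : x ∈ Ioo 0 a) := hasDerivAt_deriv_u₂ hQ (le_max_right C 1) hQM hx
  refine ⟨fun x hx => ?_, fun x hx => ?_⟩
  · rw [(hu₂ hx).differentiableAt_iff, (hu₂ hx).deriv.differentiableAt_iff]
    exact ⟨(h₁ hx).differentiableAt, (h₂ hx).differentiableAt⟩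
  · rw [(hu₂ hx).deriv.deriv_eq, (h₂ hx).deriv, hqQ (Ioo_subset_Icc_self hx),
      u₂_eqOn hqQ (Ioo_subset_Icc_self hx), neg_add_cancel]
end

section
/- For every ω ∈ ℂ, the general solution of the equation −u''(x) + ω² q(x) u(x) = 0 on (0,a) has the form u(x) = c₁ Σ_{even n ≥ 0} ω^n X̃^(n)(x)/n! + c₂ Σ_{odd n ≥ 1} ω^{n-1} X^(n)(x)/n!, where c₁, c₂ are arbitrary complex constants: both series converge uniformly on [0,a], every such combination satisfies the equation on (0,a), and every twice differentiable solution on (0,a) is of this form. -/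
open MeasureTheory Set Filter

/-- u₁ for the equation −u'' + ω² q u = 0: Σ_{even n ≥ 0} ω^n X̃^(n)(x)/n!. -/
noncomputable def U₁ (q : ℝ → ℂ) (ω : ℂ) (x : ℝ) : ℂ :=
  ∑' k : ℕ, ω ^ (2 * k) * Xtilde q (2 * k) x / (Nat.factorial (2 * k) : ℂ)

/-- u₂ for the equation −u'' + ω² q u = 0: Σ_{odd n ≥ 1} ω^{n-1} X^(n)(x)/n!. -/
noncomputable def U₂ (q : ℝ → ℂ) (ω : ℂ) (x : ℝ) : ℂ :=
  ∑' k : ℕ, ω ^ (2 * k) * Xup q (2 * k + 1) x / (Nat.factorial (2 * k + 1) : ℂ)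

/-!
Put `Y n = X^(n) / n!`, so that `Y (n + 1) x = ∫₀ˣ Y n ξ w_{n+1}(ξ) dξ`, the weight `w_m` being
`f` for even and `g` for odd `m`. Then `‖Y n x‖ ≤ (C |x|)ⁿ / n!`, so `E = ∑ Y (2k)` and
`O = ∑ Y (2k+1)` may be differentiated termwise, and `E' = f O`, `O' = g E`. Moving `ω²` into the
weights, `u₁ = E` for the weights `(1, ω² q)` and `u₂ = O` for `(ω² q, 1)`; both solve
`u'' = ω² q u`, and their Wronskian is constant, equal to its value `1` at `0`. Uniqueness for the
first-order system `(u, u')' = (u', ω² q u)` then expresses every solution through `u₁` and `u₂`.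
-/

open Function
open scoped Nat Interval

section Auxiliary

variable {f g : ℝ → ℂ} {a b : ℝ}

theorem exists_continuous_eqOn_Icc (hab : a ≤ b) (hf : ContinuousOn f (Icc a b)) :
    ∃ F : ℝ → ℂ, Continuous F ∧ EqOn f F (Icc a b) :=
  ⟨IccExtend hab fun x : Icc a b => f x, hf.domRestrict.Icc_extend',
    fun _ hx => (IccExtend_of_mem hab (fun x : Icc a b => f x) hx).symm⟩

theorem exists_norm_le_of_continuousOn (hf : ContinuousOn f (Icc a b))
    (hg : ContinuousOn g (Icc a b)) : ∃ C, ∀ x ∈ Icc a b, ‖f x‖ ≤ C ∧ ‖g x‖ ≤ C := by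
  obtain ⟨C, hC⟩ := isCompact_Icc.exists_bound_of_continuousOn (hf.prodMk hg)
  exact ⟨C, fun x hx => ⟨(norm_fst_le _).trans (hC x hx), (norm_snd_le _).trans (hC x hx)⟩⟩

theorem summable_pow_div_factorial_comp (c : ℝ) {i : ℕ → ℕ} (hi : Injective i) :
    Summable fun k => c ^ i k / (i k)! :=
  (Real.summable_pow_div_factorial c).comp_injective hi

theorem injective_two_mul : Injective fun k : ℕ => 2 * k := mul_right_injective₀ two_ne_zero

theorem injective_two_mul_add_one : Injective fun k : ℕ => 2 * k + 1 :=
  (add_left_injective 1).comp injective_two_mul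

end Auxiliary

namespace AltPrimitive

variable {f g : ℝ → ℂ}

def altWeight (f g : ℝ → ℂ) (n : ℕ) (x : ℝ) : ℂ := if Even n then f x else g x

noncomputable def altPrimitive (f g : ℝ → ℂ) : ℕ → ℝ → ℂ
  | 0 => fun _ => 1
  | n + 1 => fun x => ∫ ξ in (0 : ℝ)..x, altPrimitive f g n ξ * altWeight f g (n + 1) ξ

@[simp]
theorem altPrimitive_zero (x : ℝ) : altPrimitive f g 0 x = 1 := rfl

theorem altPrimitive_succ (n : ℕ) (x : ℝ) :
    altPrimitive f g (n + 1) x =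
      ∫ ξ in (0 : ℝ)..x, altPrimitive f g n ξ * altWeight f g (n + 1) ξ :=
  rfl

@[simp]
theorem altPrimitive_succ_apply_zero (n : ℕ) : altPrimitive f g (n + 1) 0 = 0 := by
  simp [altPrimitive_succ]

theorem continuous_altWeight (hf : Continuous f) (hg : Continuous g) (n : ℕ) :
    Continuous (altWeight f g n) := by
  unfold altWeight
  split_ifs
  exacts [hf, hg]

theorem norm_altWeight_le {C x : ℝ} (n : ℕ) (hfg : ‖f x‖ ≤ C ∧ ‖g x‖ ≤ C) :
    ‖altWeight f g n x‖ ≤ C := by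
  unfold altWeight
  split_ifs
  exacts [hfg.1, hfg.2]

theorem continuous_altPrimitive (hf : Continuous f) (hg : Continuous g) :
    ∀ n, Continuous (altPrimitive f g n)
  | 0 => continuous_const
  | n + 1 => by
    have hc : Continuous fun ξ => altPrimitive f g n ξ * altWeight f g (n + 1) ξ :=
      (continuous_altPrimitive hf hg n).mul (continuous_altWeight hf hg _)
    exact continuous_iff_continuousAt.2 fun x =>
      (hc.integral_hasStrictDerivAt 0 x).hasDerivAt.continuousAt

theorem hasDerivAt_altPrimitive_succ (hf : Continuous f) (hg : Continuous g) (n : ℕ) (x : ℝ) :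
    HasDerivAt (altPrimitive f g (n + 1)) (altPrimitive f g n x * altWeight f g (n + 1) x) x := by
  have hc : Continuous fun ξ => altPrimitive f g n ξ * altWeight f g (n + 1) ξ :=
    (continuous_altPrimitive hf hg n).mul (continuous_altWeight hf hg _)
  exact (hc.integral_hasStrictDerivAt 0 x).hasDerivAt

theorem norm_altPrimitive_le {C x : ℝ} (n : ℕ)
    (hfg : ∀ ξ ∈ uIcc 0 x, ‖f ξ‖ ≤ C ∧ ‖g ξ‖ ≤ C) :
    ‖altPrimitive f g n x‖ ≤ (C * |x|) ^ n / n ! := by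
  induction n generalizing x with
  | zero => simp
  | succ n ih =>
    have hC : 0 ≤ C := (norm_nonneg _).trans (hfg 0 left_mem_uIcc).1
    have hbound : ∀ ξ ∈ Ι (0 : ℝ) x,
        ‖altPrimitive f g n ξ * altWeight f g (n + 1) ξ‖ ≤ C ^ (n + 1) / n ! * |ξ - 0| ^ n := by
      intro ξ hξ
      have hsub : uIcc 0 ξ ⊆ uIcc 0 x := uIcc_subset_uIcc left_mem_uIcc (uIoc_subset_uIcc hξ)
      calc ‖altPrimitive f g n ξ * altWeight f g (n + 1) ξ‖
          ≤ (C * |ξ|) ^ n / n ! * C := by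
            rw [norm_mul]
            exact mul_le_mul (ih fun t ht => hfg t (hsub ht))
              (norm_altWeight_le _ (hfg ξ (uIoc_subset_uIcc hξ))) (norm_nonneg _) (by positivity)
        _ = C ^ (n + 1) / n ! * |ξ - 0| ^ n := by rw [sub_zero, mul_pow, pow_succ]; ring
    calc ‖altPrimitive f g (n + 1) x‖
        ≤ ∫ ξ in Ι (0 : ℝ) x, C ^ (n + 1) / n ! * |ξ - 0| ^ n := by
          rw [altPrimitive_succ, intervalIntegral.norm_integral_eq_norm_integral_uIoc]
          refine norm_integral_le_of_norm_le ?_ ((ae_restrict_iff' measurableSet_uIoc).2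
            (Eventually.of_forall hbound))
          exact (by fun_prop : Continuous fun ξ : ℝ => C ^ (n + 1) / n ! * |ξ - 0| ^ n)
            |>.intervalIntegrable 0 x |>.def'
      _ = (C * |x|) ^ (n + 1) / (n + 1)! := by
          rw [integral_const_mul, integral_pow_abs_sub_uIoc, sub_zero, Nat.factorial_succ]
          push_cast
          field_simp
          ring

theorem altPrimitive_mul_const_mul (c d : ℂ) (n : ℕ) (x : ℝ) :
    altPrimitive (fun x => c * f x) (fun x => d * g x) n x =
      c ^ (n / 2) * d ^ ((n + 1) / 2) * altPrimitive f g n x := by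
  induction n generalizing x with
  | zero => simp
  | succ n ih =>
    have hw : ∀ ξ, altWeight (fun x => c * f x) (fun x => d * g x) (n + 1) ξ =
        (if Even (n + 1) then c else d) * altWeight f g (n + 1) ξ := fun ξ => by
      unfold altWeight; split_ifs <;> rfl
    simp only [altPrimitive_succ, ih, hw]
    rw [← intervalIntegral.integral_const_mul]
    refine intervalIntegral.integral_congr fun ξ _ => ?_
    rcases Nat.even_or_odd (n + 1) with he | ho
    · have : (n + 1) / 2 = n / 2 + 1 ∧ (n + 1 + 1) / 2 = (n + 1) / 2 := by
        obtain ⟨m, hm⟩ := he; omega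
      simp only [he, if_true, this.1, this.2, pow_succ]; ring
    · have : (n + 1) / 2 = n / 2 ∧ (n + 1 + 1) / 2 = (n + 1) / 2 + 1 := by
        obtain ⟨m, hm⟩ := ho; omega
      simp only [Nat.not_even_iff_odd.2 ho, if_false, this.1, this.2, pow_succ]; ring

theorem altPrimitive_congr {f' g' : ℝ → ℂ} (n : ℕ) {x : ℝ} (hf : EqOn f f' (uIcc 0 x))
    (hg : EqOn g g' (uIcc 0 x)) : altPrimitive f g n x = altPrimitive f' g' n x := by
  induction n generalizing x with
  | zero => rfl
  | succ n ih =>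
    refine intervalIntegral.integral_congr fun ξ hξ => ?_
    have hsub : uIcc 0 ξ ⊆ uIcc 0 x := uIcc_subset_uIcc left_mem_uIcc hξ
    simp only [ih (hf.mono hsub) (hg.mono hsub), altWeight, hf hξ, hg hξ]

section Series

variable {a b : ℝ}

noncomputable def evenSum (f g : ℝ → ℂ) (x : ℝ) : ℂ := ∑' k, altPrimitive f g (2 * k) x

noncomputable def oddSum (f g : ℝ → ℂ) (x : ℝ) : ℂ := ∑' k, altPrimitive f g (2 * k + 1) x

theorem exists_norm_altPrimitive_le (ha : a ≤ 0) (hb : 0 ≤ b) (hf : ContinuousOn f (Icc a b))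
    (hg : ContinuousOn g (Icc a b)) :
    ∃ c, ∀ n, ∀ x ∈ Icc a b, ‖altPrimitive f g n x‖ ≤ c ^ n / n ! := by
  obtain ⟨C, hC⟩ := exists_norm_le_of_continuousOn hf hg
  refine ⟨C * max (-a) b, fun n x hx => ?_⟩
  have hC0 : 0 ≤ C := (norm_nonneg _).trans (hC x hx).1
  have hx' : |x| ≤ max (-a) b :=
    abs_le.2 ⟨by linarith [le_max_left (-a) b, hx.1], hx.2.trans (le_max_right _ _)⟩
  calc ‖altPrimitive f g n x‖ ≤ (C * |x|) ^ n / n ! :=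
        norm_altPrimitive_le n fun ξ hξ => hC ξ (uIcc_subset_Icc ⟨ha, hb⟩ hx hξ)
    _ ≤ (C * max (-a) b) ^ n / n ! := by gcongr

theorem tendstoUniformlyOn_altPrimitive (ha : a ≤ 0) (hb : 0 ≤ b)
    (hf : ContinuousOn f (Icc a b)) (hg : ContinuousOn g (Icc a b)) {i : ℕ → ℕ}
    (hi : Injective i) :
    TendstoUniformlyOn (fun N x => ∑ k ∈ Finset.range N, altPrimitive f g (i k) x)
      (fun x => ∑' k, altPrimitive f g (i k) x) atTop (Icc a b) := by
  obtain ⟨c, hc⟩ := exists_norm_altPrimitive_le ha hb hf hg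
  exact tendstoUniformlyOn_tsum_nat (summable_pow_div_factorial_comp c hi) fun k x hx => hc _ x hx

theorem summable_altPrimitive (hf : Continuous f) (hg : Continuous g) {i : ℕ → ℕ}
    (hi : Injective i) (x : ℝ) : Summable fun k => altPrimitive f g (i k) x := by
  obtain ⟨c, hc⟩ := exists_norm_altPrimitive_le (neg_nonpos.2 (abs_nonneg x)) (abs_nonneg x)
    hf.continuousOn hg.continuousOn
  exact .of_norm_bounded (summable_pow_div_factorial_comp c hi)
    fun k => hc _ x (abs_le.1 le_rfl)

theorem hasDerivAt_tsum_altPrimitive_succ (hf : Continuous f) (hg : Continuous g) {i : ℕ → ℕ}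
    (hi : Injective i) (x : ℝ) :
    HasDerivAt (fun y => ∑' k, altPrimitive f g (i k + 1) y)
      (∑' k, altPrimitive f g (i k) x * altWeight f g (i k + 1) x) x := by
  set R := |x| + 1
  have hR : -R ≤ 0 ∧ 0 ≤ R := ⟨neg_nonpos.2 (by positivity), by positivity⟩
  obtain ⟨C, hC⟩ := exists_norm_le_of_continuousOn (a := -R) (b := R) hf.continuousOn
    hg.continuousOn
  obtain ⟨c, hc⟩ := exists_norm_altPrimitive_le hR.1 hR.2 hf.continuousOn hg.continuousOn
  have hxR : x ∈ Ioo (-R) R := abs_lt.1 (lt_add_one _)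
  refine hasDerivAt_tsum_of_isPreconnected ((summable_pow_div_factorial_comp c hi).mul_right C)
    isOpen_Ioo isPreconnected_Ioo (fun k y _ => hasDerivAt_altPrimitive_succ hf hg _ y)
    (fun k y hy => ?_) hxR (summable_altPrimitive hf hg ((add_left_injective 1).comp hi) x) hxR
  have hyR := Ioo_subset_Icc_self hy
  rw [norm_mul]
  exact mul_le_mul (hc _ y hyR) (norm_altWeight_le _ (hC y hyR)) (norm_nonneg _)
    ((norm_nonneg _).trans (hc _ y hyR))

@[simp]
theorem evenSum_apply_zero : evenSum f g 0 = 1 := by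
  rw [evenSum, tsum_eq_single 0 fun k hk => ?_]
  · simp
  · obtain ⟨j, rfl⟩ := Nat.exists_eq_succ_of_ne_zero hk
    exact altPrimitive_succ_apply_zero (2 * j + 1)

@[simp]
theorem oddSum_apply_zero : oddSum f g 0 = 0 := by
  simp [oddSum]

theorem hasDerivAt_evenSum (hf : Continuous f) (hg : Continuous g) (x : ℝ) :
    HasDerivAt (evenSum f g) (f x * oddSum f g x) x := by
  have e : evenSum f g = fun y => 1 + ∑' k, altPrimitive f g (2 * k + 1 + 1) y :=
    funext fun y => by
      rw [evenSum, (summable_altPrimitive hf hg injective_two_mul y).tsum_eq_zero_add]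
      simp only [mul_zero, altPrimitive_zero, mul_add, mul_one]
  have hw : ∀ k, altWeight f g (2 * k + 1 + 1) x = f x := fun k => if_pos ⟨k + 1, by ring⟩
  rw [e]
  refine ((hasDerivAt_tsum_altPrimitive_succ hf hg injective_two_mul_add_one x).const_add 1
    ).congr_deriv ?_
  simp only [hw, tsum_mul_right]
  exact mul_comm _ _

theorem hasDerivAt_oddSum (hf : Continuous f) (hg : Continuous g) (x : ℝ) :
    HasDerivAt (oddSum f g) (g x * evenSum f g x) x := by
  have hw : ∀ k, altWeight f g (2 * k + 1) x = g x := fun k =>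
    if_neg (Nat.not_even_iff_odd.2 (odd_two_mul_add_one k))
  refine (hasDerivAt_tsum_altPrimitive_succ hf hg injective_two_mul x).congr_deriv ?_
  simp only [hw, tsum_mul_right]
  exact mul_comm _ _

variable {f' g' : ℝ → ℂ} {x : ℝ}

theorem evenSum_congr (hf : EqOn f f' (uIcc 0 x)) (hg : EqOn g g' (uIcc 0 x)) :
    evenSum f g x = evenSum f' g' x :=
  tsum_congr fun _ => altPrimitive_congr _ hf hg

theorem oddSum_congr (hf : EqOn f f' (uIcc 0 x)) (hg : EqOn g g' (uIcc 0 x)) :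
    oddSum f g x = oddSum f' g' x :=
  tsum_congr fun _ => altPrimitive_congr _ hf hg

end Series

end AltPrimitive

open AltPrimitive

theorem Xtilde_eq_factorial_mul (q : ℝ → ℂ) (n : ℕ) (x : ℝ) :
    Xtilde q n x = n ! * altPrimitive (fun _ => 1) q n x := by
  induction n generalizing x with
  | zero => simp [Xtilde]
  | succ n ih =>
    simp only [Xtilde, ih, altPrimitive_succ, altWeight, mul_assoc,
      intervalIntegral.integral_const_mul, Nat.factorial_succ]
    push_cast; ring

theorem Xup_eq_factorial_mul (q : ℝ → ℂ) (n : ℕ) (x : ℝ) :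
    Xup q n x = n ! * altPrimitive q (fun _ => 1) n x := by
  induction n generalizing x with
  | zero => simp [Xup]
  | succ n ih =>
    simp only [Xup, ih, altPrimitive_succ, altWeight, mul_assoc,
      intervalIntegral.integral_const_mul, Nat.factorial_succ]
    push_cast; ring

theorem U₁_term_eq (q : ℝ → ℂ) (ω : ℂ) (k : ℕ) (x : ℝ) :
    ω ^ (2 * k) * Xtilde q (2 * k) x / ((2 * k)! : ℂ) =
      altPrimitive (fun _ => 1) (fun x => ω ^ 2 * q x) (2 * k) x := by
  have h := altPrimitive_mul_const_mul (f := fun _ => 1) (g := q) 1 (ω ^ 2) (2 * k) x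
  simp only [mul_one, one_pow, one_mul] at h
  rw [h, Xtilde_eq_factorial_mul, show (2 * k + 1) / 2 = k by omega, ← pow_mul, mul_div_assoc,
    mul_div_cancel_left₀ _ (Nat.cast_ne_zero.2 (Nat.factorial_ne_zero _))]

theorem U₂_term_eq (q : ℝ → ℂ) (ω : ℂ) (k : ℕ) (x : ℝ) :
    ω ^ (2 * k) * Xup q (2 * k + 1) x / ((2 * k + 1)! : ℂ) =
      altPrimitive (fun x => ω ^ 2 * q x) (fun _ => 1) (2 * k + 1) x := by
  have h := altPrimitive_mul_const_mul (f := q) (g := fun _ => 1) (ω ^ 2) 1 (2 * k + 1) x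
  simp only [mul_one, one_pow] at h
  rw [h, Xup_eq_factorial_mul, show (2 * k + 1) / 2 = k by omega, ← pow_mul, mul_div_assoc,
    mul_div_cancel_left₀ _ (Nat.cast_ne_zero.2 (Nat.factorial_ne_zero _))]

theorem U₁_eq_evenSum (q : ℝ → ℂ) (ω : ℂ) :
    U₁ q ω = evenSum (fun _ => 1) (fun x => ω ^ 2 * q x) :=
  funext fun x => tsum_congr fun k => U₁_term_eq q ω k x

theorem U₂_eq_oddSum (q : ℝ → ℂ) (ω : ℂ) :
    U₂ q ω = oddSum (fun x => ω ^ 2 * q x) (fun _ => 1) :=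
  funext fun x => tsum_congr fun k => U₂_term_eq q ω k x

theorem U₁_eqOn_evenSum {q H : ℝ → ℂ} {ω : ℂ} {a : ℝ} (ha : 0 ≤ a)
    (hH : EqOn (fun x => ω ^ 2 * q x) H (Icc 0 a)) :
    EqOn (U₁ q ω) (evenSum (fun _ => 1) H) (Icc 0 a) := fun x hx => by
  rw [U₁_eq_evenSum]
  exact evenSum_congr (eqOn_refl _ _) (hH.mono (uIcc_subset_Icc ⟨le_rfl, ha⟩ hx))

theorem U₂_eqOn_oddSum {q H : ℝ → ℂ} {ω : ℂ} {a : ℝ} (ha : 0 ≤ a)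
    (hH : EqOn (fun x => ω ^ 2 * q x) H (Icc 0 a)) :
    EqOn (U₂ q ω) (oddSum H fun _ => 1) (Icc 0 a) := fun x hx => by
  rw [U₂_eq_oddSum]
  exact oddSum_congr (hH.mono (uIcc_subset_Icc ⟨le_rfl, ha⟩ hx)) (eqOn_refl _ _)

def SolvesOn (h : ℝ → ℂ) (s : Set ℝ) (y y' : ℝ → ℂ) : Prop :=
  ∀ t ∈ s, HasDerivAt y (y' t) t ∧ HasDerivAt y' (h t * y t) t

theorem solvesOn_of_deriv_deriv {h u : ℝ → ℂ} {s : Set ℝ}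
    (hu : ∀ x ∈ s, DifferentiableAt ℝ u x ∧ DifferentiableAt ℝ (deriv u) x)
    (hu₂ : ∀ x ∈ s, deriv (deriv u) x = h x * u x) : SolvesOn h s u (deriv u) := fun x hx =>
  ⟨(hu x hx).1.hasDerivAt, (hu₂ x hx) ▸ (hu x hx).2.hasDerivAt⟩

namespace SolvesOn

variable {h y y' z z' : ℝ → ℂ} {s : Set ℝ}

theorem mono {t : Set ℝ} (hy : SolvesOn h t y y') (hst : s ⊆ t) : SolvesOn h s y y' :=
  fun x hx => hy x (hst hx)

theorem const_mul (hy : SolvesOn h s y y') (c : ℂ) :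
    SolvesOn h s (fun x => c * y x) (fun x => c * y' x) := fun x hx =>
  ⟨(hy x hx).1.const_mul c, ((hy x hx).2.const_mul c).congr_deriv (by ring)⟩

theorem add (hy : SolvesOn h s y y') (hz : SolvesOn h s z z') :
    SolvesOn h s (fun x => y x + z x) (fun x => y' x + z' x) := fun x hx =>
  ⟨(hy x hx).1.add (hz x hx).1, ((hy x hx).2.add (hz x hx).2).congr_deriv (by ring)⟩

theorem sub (hy : SolvesOn h s y y') (hz : SolvesOn h s z z') :
    SolvesOn h s (fun x => y x - z x) (fun x => y' x - z' x) := fun x hx =>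
  ⟨(hy x hx).1.sub (hz x hx).1, ((hy x hx).2.sub (hz x hx).2).congr_deriv (by ring)⟩

theorem deriv_deriv_eq {v : ℝ → ℂ} {x : ℝ} (hs : IsOpen s) (hy : SolvesOn h s y y')
    (hv : EqOn v y s) (hx : x ∈ s) : deriv (deriv v) x = h x * y x := by
  have hv' : deriv v =ᶠ[nhds x] y' := eventually_of_mem (hs.mem_nhds hx) fun t ht => by
    rw [(hv.eventuallyEq_of_mem (hs.mem_nhds ht)).deriv_eq, (hy t ht).1.deriv]
  rw [hv'.deriv_eq, (hy x hx).2.deriv]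

theorem wronskian_eq (hy : SolvesOn h univ y y') (hz : SolvesOn h univ z z') (x x' : ℝ) :
    y x * z' x - y' x * z x = y x' * z' x' - y' x' * z x' := by
  have hW : ∀ t, HasDerivAt (fun t => y t * z' t - y' t * z t) 0 t := fun t => by
    obtain ⟨hy₁, hy₂⟩ := hy t (mem_univ t)
    obtain ⟨hz₁, hz₂⟩ := hz t (mem_univ t)
    exact ((hy₁.mul hz₂).sub (hy₂.mul hz₁)).congr_deriv (by ring)
  exact is_const_of_deriv_eq_zero (fun t => (hW t).differentiableAt) (fun t => (hW t).deriv) x x'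

theorem eqOn_zero {a b x₀ : ℝ} (hh : ContinuousOn h (Icc a b)) (hy : SolvesOn h (Ioo a b) y y')
    (hx₀ : x₀ ∈ Ioo a b) (h₀ : y x₀ = 0) (h₀' : y' x₀ = 0) : EqOn y 0 (Ioo a b) := by
  obtain ⟨C, hC⟩ := isCompact_Icc.exists_bound_of_continuousOn hh
  -- the right-hand side of the system `(y, y')' = (y', h y)` is Lipschitz in `(y, y')`
  let v : ℝ → ℂ × ℂ → ℂ × ℂ := fun t p => (p.2, h t * p.1)
  have hv : ∀ t ∈ Ioo a b, LipschitzOnWith (max 1 C.toNNReal) (v t) univ := fun t ht =>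
    (LipschitzWith.prod_snd.prodMk ((lipschitzWith_smul (h t)).comp LipschitzWith.prod_fst)
      |>.weaken (max_le_max le_rfl (by
        rw [mul_one, ← NNReal.coe_le_coe, coe_nnnorm]
        exact (hC t (Ioo_subset_Icc_self ht)).trans (Real.le_coe_toNNReal C)))).lipschitzOnWith
  have hsol : EqOn (fun t => (y t, y' t)) (fun _ => 0) (Ioo a b) :=
    ODE_solution_unique_of_mem_Ioo hv hx₀ (fun t ht => ⟨(hy t ht).1.prodMk (hy t ht).2, trivial⟩)
      (fun t _ => ⟨(hasDerivAt_const t 0).congr_deriv (by simp [v, Prod.zero_eq_mk]), trivial⟩)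
      (by simp [h₀, h₀'])
  exact fun t ht => congrArg Prod.fst (hsol ht)

theorem exists_eqOn_linear_combination {u u' z z' : ℝ → ℂ} {a b x₀ : ℝ}
    (hh : ContinuousOn h (Icc a b)) (hx₀ : x₀ ∈ Ioo a b) (hu : SolvesOn h (Ioo a b) u u')
    (hy : SolvesOn h (Ioo a b) y y') (hz : SolvesOn h (Ioo a b) z z')
    (hW : y x₀ * z' x₀ - y' x₀ * z x₀ ≠ 0) :
    ∃ c₁ c₂ : ℂ, EqOn u (fun x => c₁ * y x + c₂ * z x) (Ioo a b) := by
  set W := y x₀ * z' x₀ - y' x₀ * z x₀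
  -- Cramer's rule for the values of `(u, u')` at `x₀`
  set c₁ := (u x₀ * z' x₀ - u' x₀ * z x₀) / W
  set c₂ := (y x₀ * u' x₀ - y' x₀ * u x₀) / W
  have hzero := (hu.sub ((hy.const_mul c₁).add (hz.const_mul c₂))).eqOn_zero hh hx₀
    (by simp only [c₁, c₂]; field_simp; ring) (by simp only [c₁, c₂]; field_simp; ring)
  exact ⟨c₁, c₂, fun x hx => sub_eq_zero.1 (hzero hx)⟩

end SolvesOn

section FundamentalSystem

variable {h : ℝ → ℂ}

theorem solvesOn_evenSum (hh : Continuous h) :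
    SolvesOn h univ (evenSum (fun _ => 1) h) (oddSum (fun _ => 1) h) := fun x _ =>
  ⟨(hasDerivAt_evenSum continuous_const hh x).congr_deriv (one_mul _),
    hasDerivAt_oddSum continuous_const hh x⟩

theorem solvesOn_oddSum (hh : Continuous h) :
    SolvesOn h univ (oddSum h fun _ => 1) (evenSum h fun _ => 1) := fun x _ =>
  ⟨(hasDerivAt_oddSum hh continuous_const x).congr_deriv (one_mul _),
    hasDerivAt_evenSum hh continuous_const x⟩

theorem wronskian_evenSum_oddSum (hh : Continuous h) (x : ℝ) :
    evenSum (fun _ => 1) h x * evenSum h (fun _ => 1) x -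
      oddSum (fun _ => 1) h x * oddSum h (fun _ => 1) x = 1 := by
  rw [(solvesOn_evenSum hh).wronskian_eq (solvesOn_oddSum hh) x 0]
  simp

end FundamentalSystem

/-- for every ω ∈ ℂ, the general solution of −u'' + ω² q u = 0 on (0,a)
is u = c₁ Σ_{even n} ω^n X̃^(n)/n! + c₂ Σ_{odd n} ω^{n-1} X^(n)/n!: both series
converge uniformly on [0,a], every such combination solves the equation on (0,a),
and every twice differentiable solution on (0,a) is of this form. -/
theorem stmt_12 (a : ℝ) (ha : 0 < a) (q : ℝ → ℂ) (hq : ContinuousOn q (Set.Icc 0 a))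
    (ω : ℂ) :
    TendstoUniformlyOn
      (fun N x => ∑ k ∈ Finset.range N,
        ω ^ (2 * k) * Xtilde q (2 * k) x / (Nat.factorial (2 * k) : ℂ))
      (U₁ q ω) Filter.atTop (Set.Icc 0 a) ∧
    TendstoUniformlyOn
      (fun N x => ∑ k ∈ Finset.range N,
        ω ^ (2 * k) * Xup q (2 * k + 1) x / (Nat.factorial (2 * k + 1) : ℂ))
      (U₂ q ω) Filter.atTop (Set.Icc 0 a) ∧
    (∀ c₁ c₂ : ℂ, ∀ x ∈ Set.Ioo 0 a,
      -(deriv (deriv (fun y => c₁ * U₁ q ω y + c₂ * U₂ q ω y)) x) +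
        ω ^ 2 * q x * (c₁ * U₁ q ω x + c₂ * U₂ q ω x) = 0) ∧
    ∀ u : ℝ → ℂ,
      (∀ x ∈ Set.Ioo 0 a, DifferentiableAt ℝ u x ∧ DifferentiableAt ℝ (deriv u) x) →
      (∀ x ∈ Set.Ioo 0 a, -(deriv (deriv u) x) + ω ^ 2 * q x * u x = 0) →
      ∃ c₁ c₂ : ℂ, ∀ x ∈ Set.Ioo 0 a, u x = c₁ * U₁ q ω x + c₂ * U₂ q ω x := by
  have hωq : ContinuousOn (fun x => ω ^ 2 * q x) (Icc 0 a) := continuousOn_const.mul hq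
  obtain ⟨H, hH, hHq⟩ := exists_continuous_eqOn_Icc ha.le hωq
  have hU₁ := U₁_eqOn_evenSum ha.le hHq
  have hU₂ := U₂_eqOn_oddSum ha.le hHq
  have h₁ := (solvesOn_evenSum hH).mono (subset_univ (Ioo 0 a))
  have h₂ := (solvesOn_oddSum hH).mono (subset_univ (Ioo 0 a))
  refine ⟨?_, ?_, fun c₁ c₂ x hx => ?_, fun u hu hu₂ => ?_⟩
  · simp only [U₁_term_eq, U₁_eq_evenSum]
    exact tendstoUniformlyOn_altPrimitive le_rfl ha.le continuousOn_const hωq injective_two_mul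
  · simp only [U₂_term_eq, U₂_eq_oddSum]
    exact tendstoUniformlyOn_altPrimitive le_rfl ha.le hωq continuousOn_const
      injective_two_mul_add_one
  · have hx' := Ioo_subset_Icc_self hx
    have hv : EqOn (fun y => c₁ * U₁ q ω y + c₂ * U₂ q ω y)
        (fun y => c₁ * evenSum (fun _ => 1) H y + c₂ * oddSum H (fun _ => 1) y) (Ioo 0 a) :=
      fun y hy => by simp only [hU₁ (Ioo_subset_Icc_self hy), hU₂ (Ioo_subset_Icc_self hy)]
    rw [((h₁.const_mul c₁).add (h₂.const_mul c₂)).deriv_deriv_eq isOpen_Ioo hv hx,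
      ← hHq hx', hU₁ hx', hU₂ hx']
    ring
  · have hu : SolvesOn H (Ioo 0 a) u (deriv u) := solvesOn_of_deriv_deriv hu fun x hx => by
      rw [← hHq (Ioo_subset_Icc_self hx)]; linear_combination -hu₂ x hx
    obtain ⟨c₁, c₂, hc⟩ := hu.exists_eqOn_linear_combination hH.continuousOn
      ⟨half_pos ha, half_lt_self ha⟩ h₁ h₂ (by simp [wronskian_evenSum_oddSum hH])
    exact ⟨c₁, c₂, fun x hx => by
      rw [hc hx, hU₁ (Ioo_subset_Icc_self hx), hU₂ (Ioo_subset_Icc_self hx)]⟩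
end

section
/- For every c ∈ ℂ and all constants c₁, c₂ ∈ ℂ, the function u(x) = e^{c x²/2} ( c₁ + c₂ ∫₀ˣ e^{−c t²} dt ) satisfies −u''(x) + (c² x² + c) u(x) = 0 for all x ∈ ℝ; moreover every twice differentiable solution of this equation on (0,1) is of this form. -/
open MeasureTheory Set Filter

/-!
`E(x) = exp (c x² / 2)` solves `u'' = (c² x² + c) u` and never vanishes, and `1 / E²` is the
integrand `exp (-c t²)`. Reduction of order then gives everything: the Wronskian `E u' - E' u` of
two solutions of `u'' = q u` is constant, say `K`, so `(u / E)' = K / E²`, i.e.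
`u = E (c₁ + K ∫₀ˣ E⁻²)`; conversely every such function is a solution.
-/

open Complex

section ReductionOfOrder

variable {q E E' v : ℝ → ℂ}

theorem hasDerivAt_wronskian {f f' g g' : ℝ → ℂ} {x : ℝ}
    (hf : HasDerivAt f (f' x) x) (hf' : HasDerivAt f' (q x * f x) x)
    (hg : HasDerivAt g (g' x) x) (hg' : HasDerivAt g' (q x * g x) x) :
    HasDerivAt (fun y => f y * g' y - f' y * g y) 0 x :=
  ((hf.mul hg').sub (hf'.mul hg)).congr_deriv (by ring)

theorem deriv_deriv_reductionOfOrder (hE : ∀ x, HasDerivAt E (E' x) x)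
    (hE' : ∀ x, HasDerivAt E' (q x * E x) x) (hE0 : ∀ x, E x ≠ 0)
    (hv : ∀ x, HasDerivAt v (E x ^ 2)⁻¹ x) (c₁ c₂ : ℂ) (x : ℝ) :
    deriv (deriv fun y => E y * (c₁ + c₂ * v y)) x = q x * (E x * (c₁ + c₂ * v x)) := by
  have hderiv : deriv (fun y => E y * (c₁ + c₂ * v y)) =
      fun y => E' y * (c₁ + c₂ * v y) + c₂ * (E y)⁻¹ := by
    funext y
    refine ((hE y).mul ((hv y).const_mul c₂ |>.const_add c₁)).deriv.trans ?_
    field_simp [hE0 y]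
  rw [hderiv]
  refine (((hE' x).mul ((hv x).const_mul c₂ |>.const_add c₁)).add
    (((hE x).inv (hE0 x)).const_mul c₂)).deriv.trans ?_
  field_simp [hE0 x]
  ring

theorem exists_const_of_hasDerivAt_zero {G : Type*} [NormedAddCommGroup G] [NormedSpace ℝ G]
    {f : ℝ → G} {s : Set ℝ} (hs : IsOpen s) (hs' : IsPreconnected s)
    (hf : ∀ x ∈ s, HasDerivAt f 0 x) : ∃ a, ∀ x ∈ s, f x = a :=
  hs.exists_is_const_of_deriv_eq_zero hs'
    (fun x hx => (hf x hx).differentiableAt.differentiableWithinAt) fun x hx => (hf x hx).deriv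

theorem exists_eq_reductionOfOrder {s : Set ℝ} (hs : IsOpen s) (hs' : IsPreconnected s)
    (hE : ∀ x ∈ s, HasDerivAt E (E' x) x) (hE' : ∀ x ∈ s, HasDerivAt E' (q x * E x) x)
    (hE0 : ∀ x ∈ s, E x ≠ 0) (hv : ∀ x ∈ s, HasDerivAt v (E x ^ 2)⁻¹ x) {u u' : ℝ → ℂ}
    (hu : ∀ x ∈ s, HasDerivAt u (u' x) x) (hu' : ∀ x ∈ s, HasDerivAt u' (q x * u x) x) :
    ∃ c₁ c₂ : ℂ, ∀ x ∈ s, u x = E x * (c₁ + c₂ * v x) := by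
  obtain ⟨K, hK⟩ := exists_const_of_hasDerivAt_zero hs hs' fun x hx =>
    hasDerivAt_wronskian (hE x hx) (hE' x hx) (hu x hx) (hu' x hx)
  obtain ⟨c₁, hc₁⟩ :=
    exists_const_of_hasDerivAt_zero (f := fun y => u y / E y - K * v y) hs hs' fun x hx => by
      refine (((hu x hx).div (hE x hx) (hE0 x hx)).sub ((hv x hx).const_mul K)).congr_deriv ?_
      rw [div_eq_mul_inv]
      linear_combination (E x ^ 2)⁻¹ * hK x hx
  refine ⟨c₁, K, fun x hx => ?_⟩
  rw [← hc₁ x hx]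
  field_simp [hE0 x hx]
  ring

end ReductionOfOrder

theorem hasDerivAt_cexp_mul_sq_div_two (c : ℂ) (x : ℝ) :
    HasDerivAt (fun y : ℝ => cexp (c * (y : ℂ) ^ 2 / 2))
      (c * x * cexp (c * (x : ℂ) ^ 2 / 2)) x :=
  HasDerivAt.comp_ofReal (e := fun z => cexp (c * z ^ 2 / 2))
    ((((hasDerivAt_pow 2 (x : ℂ)).const_mul c).div_const 2).cexp.congr_deriv (by ring))

theorem hasDerivAt_mul_cexp_mul_sq_div_two (c : ℂ) (x : ℝ) :
    HasDerivAt (fun y : ℝ => c * y * cexp (c * (y : ℂ) ^ 2 / 2))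
      ((c ^ 2 * (x : ℂ) ^ 2 + c) * cexp (c * (x : ℂ) ^ 2 / 2)) x :=
  ((hasDerivAt_id (x : ℂ)).comp_ofReal.const_mul c).mul
    (hasDerivAt_cexp_mul_sq_div_two c x) |>.congr_deriv (by simp only [id]; ring)

theorem hasDerivAt_integral_cexp_neg_mul_sq (c : ℂ) (x : ℝ) :
    HasDerivAt (fun y : ℝ => ∫ t in (0 : ℝ)..y, cexp (-c * (t : ℂ) ^ 2))
      (cexp (c * (x : ℂ) ^ 2 / 2) ^ 2)⁻¹ x := by
  have hcont : Continuous fun t : ℝ => cexp (-c * (t : ℂ) ^ 2) := by fun_prop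
  have h := intervalIntegral.integral_hasDerivAt_right (hcont.intervalIntegrable 0 x)
    hcont.aestronglyMeasurable.stronglyMeasurableAtFilter hcont.continuousAt
  refine h.congr_deriv ?_
  rw [← Complex.exp_nat_mul, ← Complex.exp_neg]
  ring_nf

/-- for every c ∈ ℂ and all constants c₁, c₂ ∈ ℂ, the function
u(x) = e^{c x²/2} (c₁ + c₂ ∫₀ˣ e^{−c t²} dt) satisfies
−u''(x) + (c² x² + c) u(x) = 0 for all x ∈ ℝ; moreover every twice differentiable
solution of this equation on (0,1) is of this form. -/
theorem stmt_16 (c : ℂ) :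
    (∀ c₁ c₂ : ℂ, ∀ x : ℝ,
      -(deriv (deriv (fun y : ℝ => Complex.exp (c * (y : ℂ) ^ 2 / 2) *
          (c₁ + c₂ * ∫ t in (0:ℝ)..y, Complex.exp (-c * (t : ℂ) ^ 2)))) x) +
        (c ^ 2 * (x : ℂ) ^ 2 + c) *
          (Complex.exp (c * (x : ℂ) ^ 2 / 2) *
            (c₁ + c₂ * ∫ t in (0:ℝ)..x, Complex.exp (-c * (t : ℂ) ^ 2))) = 0) ∧
    ∀ u : ℝ → ℂ,
      (∀ x ∈ Set.Ioo (0:ℝ) 1, DifferentiableAt ℝ u x ∧ DifferentiableAt ℝ (deriv u) x) →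
      (∀ x ∈ Set.Ioo (0:ℝ) 1,
        -(deriv (deriv u) x) + (c ^ 2 * (x : ℂ) ^ 2 + c) * u x = 0) →
      ∃ c₁ c₂ : ℂ, ∀ x ∈ Set.Ioo (0:ℝ) 1,
        u x = Complex.exp (c * (x : ℂ) ^ 2 / 2) *
          (c₁ + c₂ * ∫ t in (0:ℝ)..x, Complex.exp (-c * (t : ℂ) ^ 2)) := by
  have hE := hasDerivAt_cexp_mul_sq_div_two c
  have hE' := hasDerivAt_mul_cexp_mul_sq_div_two c
  have hE0 : ∀ x : ℝ, cexp (c * (x : ℂ) ^ 2 / 2) ≠ 0 := fun _ => Complex.exp_ne_zero _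
  have hv := hasDerivAt_integral_cexp_neg_mul_sq c
  refine ⟨fun c₁ c₂ x => ?_, fun u hu hode => ?_⟩
  · rw [deriv_deriv_reductionOfOrder hE hE' hE0 hv]
    ring
  · exact exists_eq_reductionOfOrder isOpen_Ioo isPreconnected_Ioo (fun x _ => hE x)
      (fun x _ => hE' x) (fun x _ => hE0 x) (fun x _ => hv x)
      (fun x hx => (hu x hx).1.hasDerivAt) fun x hx =>
        (hu x hx).2.hasDerivAt.congr_deriv (by linear_combination -hode x hx)
end

section
/- The series of term-by-term derivatives Σ_{even n ≥ 0} (1/n!) (d/dx) X̃^(n)(x) converges uniformly on [0,a], and for even n ≥ 2 each term satisfies (d/dx) X̃^(n)(x) = n X̃^(n-1)(x) for all x ∈ (0,a); likewise Σ_{odd n ≥ 1} (1/n!) (d/dx) X^(n)(x) converges uniformly on [0,a], with (d/dx) X^(n)(x) = n X^(n-1)(x) on (0,a) for odd n. -/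
open MeasureTheory Set Filter
open scoped Topology

section Aux

variable {a : ℝ} {F r : ℕ → ℝ → ℂ} {K : ℝ}

lemma aux_cont (ha : 0 < a)
    (hF0 : F 0 = fun _ => (1:ℂ))
    (hFS : ∀ n, F (n+1) = fun x => ((n + 1 : ℕ) : ℂ) * ∫ ξ in (0:ℝ)..x, F n ξ * r n ξ)
    (hr : ∀ n, ContinuousOn (r n) (Icc 0 a)) :
    ∀ n, ContinuousOn (F n) (Icc 0 a) := by
  intro n
  induction n with
  | zero => rw [hF0]; exact continuousOn_const
  | succ n ih =>
    rw [hFS]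
    apply ContinuousOn.mul continuousOn_const
    have hint : IntegrableOn (fun ξ => F n ξ * r n ξ) (uIcc (0:ℝ) a) volume := by
      rw [uIcc_of_le ha.le]
      exact (ih.mul (hr n)).integrableOn_compact isCompact_Icc
    have h := intervalIntegral.continuousOn_primitive_interval hint
    rwa [uIcc_of_le ha.le] at h

lemma aux_bound (ha : 0 < a) (hK : 0 ≤ K)
    (hF0 : F 0 = fun _ => (1:ℂ))
    (hFS : ∀ n, F (n+1) = fun x => ((n + 1 : ℕ) : ℂ) * ∫ ξ in (0:ℝ)..x, F n ξ * r n ξ)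
    (hrK : ∀ n, ∀ x ∈ Icc 0 a, ‖r n x‖ ≤ K) :
    ∀ n, ∀ x ∈ Icc (0:ℝ) a, ‖F n x‖ ≤ K ^ n * x ^ n := by
  intro n
  induction n with
  | zero => intro x _; rw [hF0]; simp
  | succ n ih =>
    intro x hx
    have hx0 : (0:ℝ) ≤ x := hx.1
    have hxa : x ≤ a := hx.2
    have hIoc : uIoc (0:ℝ) x ⊆ Icc 0 a := by
      rw [uIoc_of_le hx0]
      exact Ioc_subset_Icc_self.trans (Icc_subset_Icc_right hxa)
    have key : ‖∫ ξ in (0:ℝ)..x, F n ξ * r n ξ‖ ≤ ∫ ξ in (0:ℝ)..x, K ^ (n+1) * ξ ^ n := by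
      refine le_trans (intervalIntegral.norm_integral_le_abs_of_norm_le ?_ ?_)
        (le_of_eq (abs_of_nonneg (intervalIntegral.integral_nonneg hx0 fun t ht => mul_nonneg (by positivity) (pow_nonneg ht.1 n))))
      · filter_upwards [ae_restrict_mem measurableSet_uIoc] with t ht
        have htm := hIoc ht
        have ht0 : (0:ℝ) ≤ t := htm.1
        calc ‖F n t * r n t‖ = ‖F n t‖ * ‖r n t‖ := norm_mul _ _
          _ ≤ (K ^ n * t ^ n) * K := by
              apply mul_le_mul (ih t htm) (hrK n t htm) (norm_nonneg _)
              positivity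
          _ = K ^ (n+1) * t ^ n := by ring
      · exact (continuous_const.mul (continuous_pow n)).intervalIntegrable _ _
    have hval : ∫ ξ in (0:ℝ)..x, K ^ (n+1) * ξ ^ n
        = K ^ (n+1) * (x ^ (n+1) / (n+1)) := by
      rw [intervalIntegral.integral_const_mul, integral_pow]
      norm_num
    rw [hFS]
    have hnn : (0:ℝ) < (n:ℝ) + 1 := by positivity
    calc ‖((n + 1 : ℕ) : ℂ) * ∫ ξ in (0:ℝ)..x, F n ξ * r n ξ‖
        = ((n:ℝ) + 1) * ‖∫ ξ in (0:ℝ)..x, F n ξ * r n ξ‖ := by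
          rw [norm_mul, Complex.norm_natCast]; push_cast; ring
      _ ≤ ((n:ℝ) + 1) * (K ^ (n+1) * (x ^ (n+1) / (n+1))) := by
          rw [← hval]; exact mul_le_mul_of_nonneg_left key hnn.le
      _ = K ^ (n+1) * x ^ (n+1) := by field_simp

lemma aux_hasDeriv (ha : 0 < a)
    (hFS : ∀ n, F (n+1) = fun x => ((n + 1 : ℕ) : ℂ) * ∫ ξ in (0:ℝ)..x, F n ξ * r n ξ)
    (hFcont : ∀ n, ContinuousOn (F n) (Icc 0 a))
    (hr : ∀ n, ContinuousOn (r n) (Icc 0 a)) :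
    ∀ n, ∀ x ∈ Icc (0:ℝ) a, HasDerivWithinAt (F (n+1))
      (((n + 1 : ℕ) : ℂ) * (F n x * r n x)) (Icc 0 a) x := by
  intro n x hx
  haveI : Fact (x ∈ Icc (0:ℝ) a) := ⟨hx⟩
  have hcont : ContinuousOn (fun ξ => F n ξ * r n ξ) (Icc 0 a) := (hFcont n).mul (hr n)
  have hint : IntervalIntegrable (fun ξ => F n ξ * r n ξ) volume 0 x := by
    apply ContinuousOn.intervalIntegrable
    apply hcont.mono
    rw [uIcc_of_le hx.1]
    exact Icc_subset_Icc_right hx.2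
  have h := intervalIntegral.integral_hasDerivWithinAt_right (s := Icc 0 a) (t := Icc 0 a) hint
    (hcont.stronglyMeasurableAtFilter_nhdsWithin measurableSet_Icc x)
    (hcont x hx)
  rw [hFS]
  exact h.const_mul _

lemma aux_inj2 : Function.Injective (fun k : ℕ => 2 * k) :=
  fun i j h => by simp only [] at h; omega

lemma aux_inj2' : Function.Injective (fun k : ℕ => 2 * k + 1) :=
  fun i j h => by simp only [] at h; omega

end Aux

/-- the series of term-by-term derivatives
Σ_{even n ≥ 0} (1/n!) (d/dx) X̃^(n)(x) converges uniformly on [0,a] (derivatives at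
the endpoints taken within [0,a]), and for even n ≥ 2, (d/dx) X̃^(n)(x) = n X̃^(n-1)(x)
on (0,a); likewise Σ_{odd n ≥ 1} (1/n!) (d/dx) X^(n)(x) converges uniformly on [0,a],
with (d/dx) X^(n)(x) = n X^(n-1)(x) on (0,a) for odd n. -/
theorem stmt_17 (a : ℝ) (ha : 0 < a) (q : ℝ → ℂ) (hq : ContinuousOn q (Set.Icc 0 a)) :
    (∃ v : ℝ → ℂ, TendstoUniformlyOn
      (fun N x => ∑ k ∈ Finset.range N,
        (1 / (Nat.factorial (2 * k) : ℂ)) * derivWithin (Xtilde q (2 * k)) (Set.Icc 0 a) x)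
      v Filter.atTop (Set.Icc 0 a)) ∧
    (∀ n : ℕ, Even n → 2 ≤ n → ∀ x ∈ Set.Ioo 0 a,
      deriv (Xtilde q n) x = (n : ℂ) * Xtilde q (n - 1) x) ∧
    (∃ w : ℝ → ℂ, TendstoUniformlyOn
      (fun N x => ∑ k ∈ Finset.range N,
        (1 / (Nat.factorial (2 * k + 1) : ℂ)) *
          derivWithin (Xup q (2 * k + 1)) (Set.Icc 0 a) x)
      w Filter.atTop (Set.Icc 0 a)) ∧
    ∀ n : ℕ, Odd n → ∀ x ∈ Set.Ioo 0 a,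
      deriv (Xup q n) x = (n : ℂ) * Xup q (n - 1) x := by
  obtain ⟨M, hM⟩ := isCompact_Icc.exists_bound_of_continuousOn hq
  set K : ℝ := max 1 M with hKdef
  have hK1 : (1:ℝ) ≤ K := le_max_left _ _
  have hK0 : (0:ℝ) ≤ K := zero_le_one.trans hK1
  set c : ℝ := K * (a + 1) with hcdef
  have hc0 : (0:ℝ) ≤ c := by positivity
  -- the multipliers
  set rt : ℕ → ℝ → ℂ := fun n ξ => if Even (n+1) then (1:ℂ) else q ξ with hrtdef
  set ru : ℕ → ℝ → ℂ := fun n ξ => if Even (n+1) then q ξ else (1:ℂ) with hrudef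
  have hrt : ∀ n, ContinuousOn (rt n) (Icc 0 a) := by
    intro n
    by_cases h : Even (n+1) <;> simp only [hrtdef, h, if_true, if_false]
    · exact continuousOn_const
    · exact hq
  have hru : ∀ n, ContinuousOn (ru n) (Icc 0 a) := by
    intro n
    by_cases h : Even (n+1) <;> simp only [hrudef, h, if_true, if_false]
    · exact hq
    · exact continuousOn_const
  have hqK : ∀ x ∈ Icc (0:ℝ) a, ‖q x‖ ≤ K := fun x hx => (hM x hx).trans (le_max_right _ _)
  have hrtK : ∀ n, ∀ x ∈ Icc (0:ℝ) a, ‖rt n x‖ ≤ K := by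
    intro n x hx
    by_cases h : Even (n+1) <;> simp only [hrtdef, h, if_true, if_false]
    · simpa using hK1
    · exact hqK x hx
  have hruK : ∀ n, ∀ x ∈ Icc (0:ℝ) a, ‖ru n x‖ ≤ K := by
    intro n x hx
    by_cases h : Even (n+1) <;> simp only [hrudef, h, if_true, if_false]
    · exact hqK x hx
    · simpa using hK1
  -- recurrences
  have hFS_t : ∀ n, Xtilde q (n+1)
      = fun x => ((n + 1 : ℕ) : ℂ) * ∫ ξ in (0:ℝ)..x, Xtilde q n ξ * rt n ξ := fun n => rfl
  have hFS_u : ∀ n, Xup q (n+1)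
      = fun x => ((n + 1 : ℕ) : ℂ) * ∫ ξ in (0:ℝ)..x, Xup q n ξ * ru n ξ := fun n => rfl
  have hF0_t : Xtilde q 0 = fun _ => (1:ℂ) := rfl
  have hF0_u : Xup q 0 = fun _ => (1:ℂ) := rfl
  have hcont_t := aux_cont ha hF0_t hFS_t hrt
  have hcont_u := aux_cont ha hF0_u hFS_u hru
  have hbound_t := aux_bound ha hK0 hF0_t hFS_t hrtK
  have hbound_u := aux_bound ha hK0 hF0_u hFS_u hruK
  have hderiv_t := aux_hasDeriv ha hFS_t hcont_t hrt
  have hderiv_u := aux_hasDeriv ha hFS_u hcont_u hru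
  have hud : UniqueDiffOn ℝ (Icc (0:ℝ) a) := uniqueDiffOn_Icc ha
  have hdw_t : ∀ n, ∀ x ∈ Icc (0:ℝ) a, derivWithin (Xtilde q (n+1)) (Icc 0 a) x
      = ((n + 1 : ℕ) : ℂ) * (Xtilde q n x * rt n x) :=
    fun n x hx => (hderiv_t n x hx).derivWithin (hud x hx)
  have hdw_u : ∀ n, ∀ x ∈ Icc (0:ℝ) a, derivWithin (Xup q (n+1)) (Icc 0 a) x
      = ((n + 1 : ℕ) : ℂ) * (Xup q n x * ru n x) :=
    fun n x hx => (hderiv_u n x hx).derivWithin (hud x hx)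
  -- summable majorant
  have hg : Summable (fun n : ℕ => (n:ℝ) * c ^ n / n.factorial) := by
    rw [← summable_nat_add_iff 1]
    have h1 : Summable (fun n : ℕ => c * (c ^ n / n.factorial)) :=
      (Real.summable_pow_div_factorial c).mul_left c
    refine h1.congr fun n => ?_
    have hfac : ((n+1).factorial : ℝ) = (n+1) * n.factorial := by
      rw [Nat.factorial_succ]; push_cast; ring
    rw [hfac]
    have : (n.factorial : ℝ) ≠ 0 := by positivity
    field_simp
    push_cast
    ring
  -- the generic term bound
  have keybound : ∀ (m : ℕ), ∀ x ∈ Icc (0:ℝ) a, ∀ X R : ℂ, ‖X‖ ≤ K ^ m * x ^ m → ‖R‖ ≤ K →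
      ‖(1 / ((m+1).factorial : ℂ)) * (((m + 1 : ℕ) : ℂ) * (X * R))‖
        ≤ ((m+1 : ℕ):ℝ) * c ^ (m+1) / (m+1).factorial := by
    intro m x hx X R hX hR
    have hx0 : (0:ℝ) ≤ x := hx.1
    have hXR : ‖X * R‖ ≤ c ^ (m+1) := by
      calc ‖X * R‖ = ‖X‖ * ‖R‖ := norm_mul _ _
        _ ≤ (K ^ m * x ^ m) * K := by
            apply mul_le_mul hX hR (norm_nonneg _); positivity
        _ = K ^ (m+1) * x ^ m := by ring
        _ ≤ K ^ (m+1) * (a+1) ^ (m+1) := by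
            apply mul_le_mul_of_nonneg_left _ (by positivity)
            calc x ^ m ≤ (a+1) ^ m := pow_le_pow_left₀ hx0 (by linarith [hx.2]) m
              _ ≤ (a+1) ^ (m+1) := pow_le_pow_right₀ (by linarith) (Nat.le_succ m)
        _ = c ^ (m+1) := by rw [hcdef, mul_pow]
    have hfacpos : (0:ℝ) < ((m+1).factorial : ℝ) := by positivity
    calc ‖(1 / ((m+1).factorial : ℂ)) * (((m + 1 : ℕ) : ℂ) * (X * R))‖
        = (1 / ((m+1).factorial : ℝ)) * (((m+1:ℕ):ℝ) * ‖X * R‖) := by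
          rw [norm_mul, norm_mul, norm_div, norm_one, Complex.norm_natCast,
            Complex.norm_natCast]
      _ ≤ (1 / ((m+1).factorial : ℝ)) * (((m+1:ℕ):ℝ) * c ^ (m+1)) := by
          apply mul_le_mul_of_nonneg_left _ (by positivity)
          exact mul_le_mul_of_nonneg_left hXR (by positivity)
      _ = ((m+1 : ℕ):ℝ) * c ^ (m+1) / (m+1).factorial := by ring
  refine ⟨?_, ?_, ?_, ?_⟩
  · -- uniform convergence, Xtilde even series
    refine ⟨_, tendstoUniformlyOn_tsum_nat
      (f := fun k x => (1 / (Nat.factorial (2 * k) : ℂ)) *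
        derivWithin (Xtilde q (2 * k)) (Set.Icc 0 a) x)
      (u := fun k => ((2*k : ℕ):ℝ) * c ^ (2*k) / (2*k).factorial)
      (hg.comp_injective aux_inj2) ?_⟩
    intro k x hx
    match k with
    | 0 =>
      have h0 : derivWithin (Xtilde q 0) (Icc (0:ℝ) a) x = 0 := by
        rw [hF0_t]
        exact (hasDerivWithinAt_const _ _ _).derivWithin (hud x hx)
      show ‖1 / ((Nat.factorial (2*0) : ℕ):ℂ) * derivWithin (Xtilde q (2*0)) (Icc 0 a) x‖
        ≤ ((2*0 : ℕ):ℝ) * c ^ (2*0) / (2*0).factorial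
      simp only [Nat.mul_zero] at h0 ⊢
      simp [h0]
    | k + 1 =>
      show ‖1 / ((Nat.factorial (2*(k+1)) : ℕ):ℂ) * derivWithin (Xtilde q (2*(k+1))) (Icc 0 a) x‖
        ≤ ((2*(k+1) : ℕ):ℝ) * c ^ (2*(k+1)) / (2*(k+1)).factorial
      have h2 : 2 * (k+1) = (2*k+1) + 1 := by ring
      rw [h2, hdw_t (2*k+1) x hx]
      exact keybound (2*k+1) x hx _ _ (hbound_t (2*k+1) x hx) (hrtK (2*k+1) x hx)
  · -- interior derivative, Xtilde even
    intro n hn h2 x hx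
    obtain ⟨m, rfl⟩ : ∃ m, n = m + 1 := ⟨n - 1, by omega⟩
    have hxI : x ∈ Icc (0:ℝ) a := Ioo_subset_Icc_self hx
    have hnhds : Icc (0:ℝ) a ∈ 𝓝 x := Icc_mem_nhds hx.1 hx.2
    have hd := ((hderiv_t m x hxI).hasDerivAt hnhds).deriv
    rw [hd]
    have hrt1 : rt m x = 1 := by simp only [hrtdef, if_pos hn]
    rw [hrt1]
    simp
  · -- uniform convergence, Xup odd series
    refine ⟨_, tendstoUniformlyOn_tsum_nat
      (f := fun k x => (1 / (Nat.factorial (2 * k + 1) : ℂ)) *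
        derivWithin (Xup q (2 * k + 1)) (Set.Icc 0 a) x)
      (u := fun k => ((2*k+1 : ℕ):ℝ) * c ^ (2*k+1) / (2*k+1).factorial)
      (hg.comp_injective aux_inj2') ?_⟩
    intro k x hx
    show ‖1 / ((Nat.factorial (2*k+1) : ℕ):ℂ) * derivWithin (Xup q (2*k+1)) (Icc 0 a) x‖
      ≤ ((2*k+1 : ℕ):ℝ) * c ^ (2*k+1) / (2*k+1).factorial
    rw [hdw_u (2*k) x hx]
    exact keybound (2*k) x hx _ _ (hbound_u (2*k) x hx) (hruK (2*k) x hx)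
  · -- interior derivative, Xup odd
    intro n hn x hx
    obtain ⟨m, rfl⟩ : ∃ m, n = m + 1 := ⟨n - 1, by rcases hn with ⟨j, hj⟩; omega⟩
    have hxI : x ∈ Icc (0:ℝ) a := Ioo_subset_Icc_self hx
    have hnhds : Icc (0:ℝ) a ∈ 𝓝 x := Icc_mem_nhds hx.1 hx.2
    have hd := ((hderiv_u m x hxI).hasDerivAt hnhds).deriv
    rw [hd]
    have hru1 : ru m x = 1 := by
      simp only [hrudef, if_neg (Nat.not_even_iff_odd.mpr hn)]
    rw [hru1]
    simp
end
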